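/- Less-noisy condition implies its conditioned version (Section IV, proof that (15) implies (14a)): Fix a DM-CIC with transition probability p(y₁,y₂|x₁,x₂). Suppose that for every finite set 𝒰 and every joint pmf p(u,x₁,x₂) with U — (X₁,X₂) — (Y₁,Y₂) Markov through the channel, I(U;Y₁) ≤ I(U;Y₂). Then for every finite set 𝒰 and every joint pmf p(u,x₁,x₂) with the same Markov structure, I(U;Y₁|X₁) ≤ I(U;Y₂|X₁). -/

import Mathlib

open scoped Classical BigOperators
open Filter Topology

noncomputable section

namespace CIC

/-- `q` is a probability mass function on the finite type `Ω`. -/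
def IsPMF {Ω : Type*} [Fintype Ω] (q : Ω → ℝ) : Prop :=
  (∀ ω, 0 ≤ q ω) ∧ ∑ ω, q ω = 1

/-- Probability that the random variable `f` takes the value `a`, under the joint pmf `q`. -/
def pr {Ω α : Type*} [Fintype Ω] (q : Ω → ℝ) (f : Ω → α) (a : α) : ℝ :=
  ∑ ω, if f ω = a then q ω else 0

/-- Mutual information `I(f ; g)` of the random variables `f`, `g` under the joint pmf `q`. -/
def mi {Ω α β : Type*} [Fintype Ω] (q : Ω → ℝ) (f : Ω → α) (g : Ω → β) : ℝ :=
  ∑ ω, q ω * Real.log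
    (pr q (fun ω' => (f ω', g ω')) (f ω, g ω) / (pr q f (f ω) * pr q g (g ω)))

/-- Conditional mutual information `I(f ; g ∣ h)` under the joint pmf `q`. -/
def cmi {Ω α β γ : Type*} [Fintype Ω] (q : Ω → ℝ) (f : Ω → α) (g : Ω → β) (h : Ω → γ) : ℝ :=
  ∑ ω, q ω * Real.log
    ((pr q (fun ω' => (f ω', g ω', h ω')) (f ω, g ω, h ω) * pr q h (h ω)) /
      (pr q (fun ω' => (f ω', h ω')) (f ω, h ω) * pr q (fun ω' => (g ω', h ω')) (g ω, h ω)))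

variable {X1 X2 Y1 Y2 : Type*} [Fintype X1] [Fintype X2] [Fintype Y1] [Fintype Y2]

/-- `W` is a DM-CIC channel transition probability `p(y₁,y₂ ∣ x₁,x₂)`. -/
def IsChannel (W : X1 → X2 → Y1 × Y2 → ℝ) : Prop :=
  (∀ x1 x2 y, 0 ≤ W x1 x2 y) ∧ ∀ x1 x2, ∑ y, W x1 x2 y = 1

/-- Single-letter joint distribution of `(X₁,X₂,Y₁,Y₂)` induced by the input pmf `p`,
with `(Y₁,Y₂)` generated from `(X₁,X₂)` through the channel `W`. -/
def slJoint (W : X1 → X2 → Y1 × Y2 → ℝ) (p : X1 × X2 → ℝ) : X1 × X2 × Y1 × Y2 → ℝ :=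
  fun ω => p (ω.1, ω.2.1) * W ω.1 ω.2.1 (ω.2.2.1, ω.2.2.2)

/-- The DM-CIC `W` is cognitive-more-capable:
`I(X₁,X₂;Y₂) ≥ I(X₁,X₂;Y₁)` for every input distribution `p(x₁,x₂)`. -/
def CognitiveMoreCapable (W : X1 → X2 → Y1 × Y2 → ℝ) : Prop :=
  ∀ p : X1 × X2 → ℝ, IsPMF p →
    mi (slJoint W p) (fun ω => (ω.1, ω.2.1)) (fun ω => ω.2.2.1) ≤
      mi (slJoint W p) (fun ω => (ω.1, ω.2.1)) (fun ω => ω.2.2.2)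

/-- Joint distribution of `(U,X₁,X₂,Y₁,Y₂)` induced by a pmf `q` on `U × X₁ × X₂`, where
`(Y₁,Y₂)` are generated from `(X₁,X₂)` through the channel `W`
(so `U — (X₁,X₂) — (Y₁,Y₂)` is a Markov chain). -/
def auxJoint (W : X1 → X2 → Y1 × Y2 → ℝ) {U : Type*} (q : U × X1 × X2 → ℝ) :
    U × X1 × X2 × Y1 × Y2 → ℝ :=
  fun ω => q (ω.1, ω.2.1, ω.2.2.1) * W ω.2.1 ω.2.2.1 (ω.2.2.2.1, ω.2.2.2.2)

/-- An `(n, M1, M2)` code for the DM-CIC: the cognitive encoder `f2` knows both messages. -/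
structure Code (X1 X2 Y1 Y2 : Type*) (n M1 M2 : ℕ) where
  f1 : Fin M1 → Fin n → X1
  f2 : Fin M1 → Fin M2 → Fin n → X2
  g1 : (Fin n → Y1) → Fin M1
  g2 : (Fin n → Y2) → Fin M2

/-- Average error probability of a code, for independent uniform messages and `n`
memoryless uses of the channel `W`. -/
def avgErr (W : X1 → X2 → Y1 × Y2 → ℝ) {n M1 M2 : ℕ} (c : Code X1 X2 Y1 Y2 n M1 M2) : ℝ :=
  (1 / ((M1 : ℝ) * (M2 : ℝ))) *
    ∑ m1 : Fin M1, ∑ m2 : Fin M2, ∑ y1 : Fin n → Y1, ∑ y2 : Fin n → Y2,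
      (∏ i, W (c.f1 m1 i) (c.f2 m1 m2 i) (y1 i, y2 i)) *
        (if c.g1 y1 ≠ m1 ∨ c.g2 y2 ≠ m2 then 1 else 0)

/-- A rate pair `(R₁, R₂)` is achievable for the DM-CIC `W`: there is a sequence of
`(n, ⌈2^{nR₁}⌉, ⌈2^{nR₂}⌉)` codes whose average error probability tends to `0`. -/
def Achievable (W : X1 → X2 → Y1 × Y2 → ℝ) (R1 R2 : ℝ) : Prop :=
  ∃ c : (n : ℕ) → Code X1 X2 Y1 Y2 n ⌈(2 : ℝ) ^ ((n : ℝ) * R1)⌉₊ ⌈(2 : ℝ) ^ ((n : ℝ) * R2)⌉₊,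
    Tendsto (fun n => avgErr W (c n)) atTop (𝓝 0)

end CIC

/-!
Conditioning on `X₁ = a` turns the auxiliary pmf `q(u, x₁, x₂)` into the auxiliary pmf
`q(u, x₂ | a)` for the same channel, because the channel does not change the input marginal.
By the chain rule, `I(U; Yᵢ | X₁)` is the `P(X₁ = a)`-average of `I(U; Yᵢ)` under these
conditioned pmfs, and the less-noisy hypothesis compares the two averages term by term.
-/

namespace CIC

section Conditioning

variable {Ω α β γ : Type*} [Fintype Ω]

/-- On a null event (`pr P h c = 0`) this is `0`, through `x / 0 = 0`. -/
def condOn (P : Ω → ℝ) (h : Ω → γ) (c : γ) : Ω → ℝ :=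
  fun ω => if h ω = c then P ω / pr P h c else 0

lemma pr_nonneg {P : Ω → ℝ} (hP : ∀ ω, 0 ≤ P ω) (f : Ω → α) (a : α) : 0 ≤ pr P f a :=
  Finset.sum_nonneg fun ω _ => by split_ifs <;> simp [hP ω]

lemma pr_prodAssoc (P : Ω → ℝ) (f : Ω → α) (g : Ω → β) (h : Ω → γ) (a : α) (b : β) (c : γ) :
    pr P (fun ω => ((f ω, g ω), h ω)) ((a, b), c) = pr P (fun ω => (f ω, g ω, h ω)) (a, b, c) := by
  simp only [pr, Prod.mk.injEq, and_assoc]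

lemma pr_condOn (P : Ω → ℝ) (h : Ω → γ) (c : γ) (f : Ω → α) (a : α) :
    pr (condOn P h c) f a = pr P (fun ω => (f ω, h ω)) (a, c) / pr P h c := by
  rw [pr, pr, Finset.sum_div]
  refine Finset.sum_congr rfl fun ω _ => ?_
  by_cases hf : f ω = a <;> by_cases hh : h ω = c <;> simp [condOn, hf, hh]

lemma isPMF_condOn {P : Ω → ℝ} (hP : IsPMF P) {h : Ω → γ} {c : γ} (hc : pr P h c ≠ 0) :
    IsPMF (condOn P h c) := by
  refine ⟨fun ω => ?_, ?_⟩
  · unfold condOn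
    split_ifs
    exacts [div_nonneg (hP.1 ω) (pr_nonneg hP.1 h c), le_rfl]
  · calc ∑ ω, condOn P h c ω = (∑ ω, if h ω = c then P ω else 0) / pr P h c := by
          simp only [Finset.sum_div, condOn, ite_div, zero_div]
      _ = 1 := div_self hc

/-- On a null fibre `pr P h c = 0` both sides vanish, through `log 0 = 0` and `x / 0 = 0`. -/
theorem cmi_eq_sum_mul_mi_condOn [Fintype γ] (P : Ω → ℝ) (f : Ω → α) (g : Ω → β) (h : Ω → γ) :
    cmi P f g h = ∑ c, pr P h c * mi (condOn P h c) f g := by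
  rw [cmi, ← Finset.sum_fiberwise Finset.univ h]
  refine Finset.sum_congr rfl fun c _ => ?_
  rw [mi, Finset.mul_sum, Finset.sum_filter]
  refine Finset.sum_congr rfl fun ω _ => ?_
  by_cases hω : h ω = c
  · subst hω
    simp only [if_true, condOn, pr_condOn, pr_prodAssoc]
    rcases eq_or_ne (pr P h (h ω)) 0 with hc | hc
    · simp [hc]
    · rw [← mul_assoc, mul_div_cancel₀ _ hc]
      congr 2
      field_simp
  · simp [condOn, hω]

end Conditioning

section Channel

variable {X1 X2 Y1 Y2 U α : Type*} [Fintype X1] [Fintype X2] [Fintype Y1] [Fintype Y2]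
  [Fintype U]

lemma pr_auxJoint_input {W : X1 → X2 → Y1 × Y2 → ℝ} (hW : ∀ x1 x2, ∑ y, W x1 x2 y = 1)
    (q : U × X1 × X2 → ℝ) (F : U × X1 × X2 → α) (a : α) :
    pr (auxJoint W q) (fun ω => F (ω.1, ω.2.1, ω.2.2.1)) a = pr q F a := by
  have hW' : ∀ x1 x2, ∑ y1, ∑ y2, W x1 x2 (y1, y2) = 1 := fun x1 x2 => by
    rw [← Fintype.sum_prod_type]; exact hW x1 x2
  simp only [pr, auxJoint, Fintype.sum_prod_type]
  refine Finset.sum_congr rfl fun u _ => Finset.sum_congr rfl fun x1 _ =>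
    Finset.sum_congr rfl fun x2 _ => ?_
  split_ifs <;> simp [← Finset.mul_sum, hW']

lemma condOn_auxJoint {W : X1 → X2 → Y1 × Y2 → ℝ} (hW : ∀ x1 x2, ∑ y, W x1 x2 y = 1)
    (q : U × X1 × X2 → ℝ) (F : U × X1 × X2 → α) (a : α) :
    condOn (auxJoint W q) (fun ω => F (ω.1, ω.2.1, ω.2.2.1)) a = auxJoint W (condOn q F a) := by
  funext ω
  simp only [condOn, auxJoint, pr_auxJoint_input hW]
  split_ifs <;> ring

end Channel

/-- **Less-noisy condition implies its conditioned version (Section IV, (15) ⟹ (14a)).**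
If `I(U;Y₁) ≤ I(U;Y₂)` for every finite auxiliary set (w.l.o.g. `Fin k`) and pmf
`q(u,x₁,x₂)` with `U — (X₁,X₂) — (Y₁,Y₂)` Markov through the channel, then
`I(U;Y₁∣X₁) ≤ I(U;Y₂∣X₁)` for every such auxiliary pmf. -/
theorem less_noisy_implies_conditioned_less_noisy
    {X1 X2 Y1 Y2 : Type*} [Fintype X1] [Fintype X2] [Fintype Y1] [Fintype Y2]
    (W : X1 → X2 → Y1 × Y2 → ℝ) (hW : IsChannel W)
    (hln : ∀ (k : ℕ) (q : Fin k × X1 × X2 → ℝ), IsPMF q →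
      mi (auxJoint W q) (fun ω => ω.1) (fun ω => ω.2.2.2.1) ≤
        mi (auxJoint W q) (fun ω => ω.1) (fun ω => ω.2.2.2.2)) :
    ∀ (k : ℕ) (q : Fin k × X1 × X2 → ℝ), IsPMF q →
      cmi (auxJoint W q) (fun ω => ω.1) (fun ω => ω.2.2.2.1) (fun ω => ω.2.1) ≤
        cmi (auxJoint W q) (fun ω => ω.1) (fun ω => ω.2.2.2.2) (fun ω => ω.2.1) := by
  intro k q hq
  have hmarg : pr (auxJoint W q) (fun ω => ω.2.1) = pr q (fun u => u.2.1) :=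
    funext (pr_auxJoint_input hW.2 q (fun u => u.2.1))
  rw [cmi_eq_sum_mul_mi_condOn, cmi_eq_sum_mul_mi_condOn, hmarg]
  refine Finset.sum_le_sum fun a _ => ?_
  rcases eq_or_ne (pr q (fun u => u.2.1) a) 0 with ha | ha
  · simp [ha]
  · rw [condOn_auxJoint hW.2 q (fun u => u.2.1)]
    exact mul_le_mul_of_nonneg_left (hln k _ (isPMF_condOn hq ha)) (pr_nonneg hq.1 _ a)

end CIC
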